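/- For all n ≥ 0 and k ≥ 0, D(n,k) = Σ_{s=n−k}^{n} C(n,s)·(−1)^{n−s}·S(s, s+k−n), where S denotes Stirling numbers of the second kind. -/

import Mathlib

/-!
Sort the partitions of an `m`-set into `r` blocks by their set of singleton blocks: deleting `i`
singletons leaves a partition of the other `m - i` points into `r - i` blocks of size at least two,
so `S(m, r) = ∑ᵢ C(m, i) D(m - i, r - i)`. Written in terms of `j = m - i`, this says that
`s ↦ S(s, s + k - n)` is the binomial transform of `j ↦ D(j, j + k - n)` on `[n - k, n]`, and
binomial inversion recovers `D(n, k)`.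
-/

noncomputable def partD (n k : ℕ) : ℕ :=
  Nat.card {P : Finpartition (Finset.univ : Finset (Fin n)) //
    P.parts.card = k ∧ ∀ b ∈ P.parts, 2 ≤ b.card}

/-- The Stirling number of the second kind: the number of partitions of an
`m`-element set into `j` blocks. -/
noncomputable def stirling2 (m j : ℕ) : ℕ :=
  Nat.card {P : Finpartition (Finset.univ : Finset (Fin m)) // P.parts.card = j}

open Finset

theorem sum_Icc_neg_one_pow_mul_choose_mul_choose {R : Type*} [CommRing R] (j n : ℕ) :
    ∑ s ∈ Icc j n, (-1 : R) ^ (n - s) * n.choose s * s.choose j = if j = n then 1 else 0 := by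
  rcases lt_or_ge n j with hnj | hjn
  · simp [Icc_eq_empty_of_lt hnj, hnj.ne']
  -- `C(n, s) C(s, j) = C(n, j) C(n - j, s - j)`, and what is left is `(1 - 1) ^ (n - j)`.
  have hterm : ∀ u ∈ range (n - j + 1),
      (-1 : R) ^ (n - (j + u)) * n.choose (j + u) * (j + u).choose j =
        n.choose j * (1 ^ u * (-1) ^ (n - j - u) * (n - j).choose u) := by
    intro u _
    rw [mul_assoc, ← Nat.cast_mul, Nat.choose_mul le_self_add, Nat.add_sub_cancel_left,
      Nat.sub_add_eq]
    push_cast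
    ring
  rw [← Ico_add_one_right_eq_Icc, sum_Ico_eq_sum_range, Nat.sub_add_comm hjn, sum_congr rfl hterm,
    ← mul_sum, ← add_pow, add_neg_cancel]
  rcases eq_or_lt_of_le hjn with rfl | hlt
  · simp
  · simp [hlt.ne, Nat.sub_ne_zero_of_lt hlt]

theorem binomial_inversion {R : Type*} [CommRing R] {f g : ℕ → R} {a n : ℕ} (ha : a ≤ n)
    (h : ∀ s ∈ Icc a n, g s = ∑ j ∈ Icc a s, s.choose j * f j) :
    f n = ∑ s ∈ Icc a n, n.choose s * (-1) ^ (n - s) * g s := by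
  symm
  calc ∑ s ∈ Icc a n, n.choose s * (-1) ^ (n - s) * g s
      = ∑ s ∈ Icc a n, ∑ j ∈ Icc a s, n.choose s * (-1) ^ (n - s) * (s.choose j * f j) :=
        sum_congr rfl fun s hs => by rw [h s hs, mul_sum]
    _ = ∑ j ∈ Icc a n, ∑ s ∈ Icc j n, n.choose s * (-1) ^ (n - s) * (s.choose j * f j) :=
        sum_comm' fun s j => by simp only [mem_Icc]; omega
    _ = ∑ j ∈ Icc a n,
          (∑ s ∈ Icc j n, (-1 : R) ^ (n - s) * n.choose s * s.choose j) * f j := by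
        simp_rw [sum_mul]
        exact sum_congr rfl fun _ _ => sum_congr rfl fun _ _ => by ring
    _ = f n := by simp [sum_Icc_neg_one_pow_mul_choose_mul_choose, ha]

lemma Finset.disjoint_map_singleton_of_two_le_card {α : Type*} {F : Finset (Finset α)}
    {T : Finset α} (hF : ∀ b ∈ F, 2 ≤ #b) :
    Disjoint F (T.map ⟨singleton, singleton_injective⟩) := by
  refine disjoint_left.2 fun b hb hbT => ?_
  obtain ⟨a, -, rfl⟩ := mem_map.1 hbT
  simpa using hF _ hb

namespace Finpartition

section DisjSup

variable {γ : Type*} [DistribLattice γ] [OrderBot γ] [DecidableEq γ] {a b : γ}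

def disjSup (P : Finpartition a) (Q : Finpartition b) (h : Disjoint a b) :
    Finpartition (a ⊔ b) where
  parts := P.parts ∪ Q.parts
  supIndep := by
    rw [supIndep_iff_pairwiseDisjoint, coe_union]
    exact P.disjoint.union Q.disjoint fun x hx y hy _ => h.mono (P.le hx) (Q.le hy)
  sup_parts := by rw [sup_union, P.sup_parts, Q.sup_parts]
  bot_notMem := by simp [P.bot_notMem, Q.bot_notMem]

end DisjSup

variable {α β : Type*} [DecidableEq α] [DecidableEq β]

section FinsetMap

variable {s : Finset α}

def finsetMap (f : α ↪ β) (P : Finpartition s) : Finpartition (s.map f) :=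
  ofExistsUnique (P.parts.map (mapEmbedding f).toEmbedding)
    (by simpa using fun b hb => P.le hb)
    (by
      simp only [mem_map, RelEmbedding.coe_toEmbedding, mapEmbedding_apply, forall_exists_index,
        and_imp, forall_apply_eq_imp_iff₂]
      intro a ha
      obtain ⟨t, ⟨ht, hat⟩, huniq⟩ := P.existsUnique_mem ha
      refine ⟨t.map f, ⟨⟨t, ht, rfl⟩, mem_map_of_mem f hat⟩, ?_⟩
      rintro _ ⟨⟨u, hu, rfl⟩, hau⟩
      rw [huniq u ⟨hu, by simpa using hau⟩])
    (by simp)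

@[simp]
lemma parts_finsetMap (f : α ↪ β) (P : Finpartition s) :
    (P.finsetMap f).parts = P.parts.map (mapEmbedding f).toEmbedding := rfl

noncomputable def finsetComap (f : α ↪ β) (Q : Finpartition (s.map f)) : Finpartition s :=
  ofExistsUnique (Q.parts.image fun b => b.preimage f f.injective.injOn)
    (by
      simp only [forall_mem_image]
      exact fun b hb => preimage_subset (Q.le hb))
    (by
      intro a ha
      obtain ⟨t, ⟨ht, hat⟩, huniq⟩ := Q.existsUnique_mem (mem_map_of_mem f ha)
      refine ⟨t.preimage f f.injective.injOn,
        ⟨mem_image_of_mem _ ht, mem_preimage.2 hat⟩, ?_⟩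
      rintro _ ⟨hv, hav⟩
      obtain ⟨u, hu, rfl⟩ := mem_image.1 hv
      rw [huniq u ⟨hu, mem_preimage.1 hav⟩])
    (by
      simp only [mem_image, not_exists, not_and]
      intro b hb hbe
      obtain ⟨y, hy⟩ := Q.nonempty_of_mem_parts hb
      obtain ⟨x, -, rfl⟩ := mem_map.1 (Q.le hb hy)
      exact notMem_empty x (hbe ▸ mem_preimage.2 hy))

@[simp]
lemma parts_finsetComap (f : α ↪ β) (Q : Finpartition (s.map f)) :
    (finsetComap f Q).parts = Q.parts.image fun b => b.preimage f f.injective.injOn := rfl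

noncomputable def finsetMapEquiv (f : α ↪ β) (s : Finset α) :
    Finpartition s ≃ Finpartition (s.map f) where
  toFun := finsetMap f
  invFun := finsetComap f
  left_inv P := by
    ext b
    simp [preimage_map]
  right_inv Q := by
    have hmap : ∀ c ∈ Q.parts, (c.preimage f f.injective.injOn).map f = c := fun c hc => by
      obtain ⟨u, -, rfl⟩ := subset_map_iff.1 (Q.le hc)
      rw [preimage_map]
    ext1
    simp only [parts_finsetMap, parts_finsetComap, map_eq_image, image_image]
    exact (image_congr hmap).trans image_id'

end FinsetMap

section Isolated

variable {s T : Finset α} (P : Finpartition s)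

def isolated : Finset α := {a ∈ s | {a} ∈ P.parts}

variable {P} in
lemma mem_isolated {a : α} : a ∈ P.isolated ↔ {a} ∈ P.parts := by
  rw [isolated, mem_filter, and_iff_right_iff_imp]
  exact fun h => P.le h (mem_singleton_self a)

lemma isolated_subset : P.isolated ⊆ s := filter_subset _ _

lemma disjoint_isolated_of_two_le_card {b : Finset α} (hb : b ∈ P.parts) (h2 : 2 ≤ #b) :
    Disjoint b P.isolated := by
  refine disjoint_left.2 fun a hab ha => ?_
  rw [P.eq_of_mem_parts hb (mem_isolated.1 ha) hab (mem_singleton_self a), card_singleton] at h2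
  omega

lemma parts_eq_filter_union_isolated :
    P.parts =
      {b ∈ P.parts | 2 ≤ #b} ∪ P.isolated.map ⟨singleton, singleton_injective⟩ := by
  ext b
  simp only [mem_union, mem_filter, mem_map, mem_isolated, Function.Embedding.coeFn_mk]
  constructor
  · intro hb
    rcases le_or_gt 2 #b with h | h
    · exact Or.inl ⟨hb, h⟩
    · have := (P.nonempty_of_mem_parts hb).card_pos
      obtain ⟨a, rfl⟩ := card_eq_one.1 (show #b = 1 by omega)
      exact Or.inr ⟨a, hb, rfl⟩
  · rintro (⟨hb, -⟩ | ⟨a, ha, rfl⟩) <;> assumption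

lemma card_parts_eq_card_filter_add_card_isolated :
    #P.parts = #{b ∈ P.parts | 2 ≤ #b} + #P.isolated := by
  conv_lhs => rw [P.parts_eq_filter_union_isolated]
  rw [card_union_of_disjoint
    (disjoint_map_singleton_of_two_le_card fun b hb => (mem_filter.1 hb).2), card_map]

lemma parts_avoid_isolated : (P.avoid P.isolated).parts = {b ∈ P.parts | 2 ≤ #b} := by
  ext c
  rw [mem_avoid, mem_filter]
  constructor
  · rintro ⟨d, hd, hdT, rfl⟩
    rw [P.parts_eq_filter_union_isolated, mem_union, mem_filter, mem_map] at hd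
    obtain ⟨hd, h2⟩ | ⟨a, ha, rfl⟩ := hd
    · rw [sdiff_eq_self_of_disjoint (P.disjoint_isolated_of_two_le_card hd h2)]
      exact ⟨hd, h2⟩
    · exact absurd (singleton_subset_iff.2 ha) hdT
  · rintro ⟨hc, h2⟩
    have hdisj := P.disjoint_isolated_of_two_le_card hc h2
    refine ⟨c, hc, fun hcT => ?_, sdiff_eq_self_of_disjoint hdisj⟩
    obtain ⟨a, ha⟩ := P.nonempty_of_mem_parts hc
    exact disjoint_left.1 hdisj ha (hcT ha)

def addSingletons (hT : T ⊆ s) (Q : Finpartition (s \ T)) : Finpartition s :=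
  (Q.disjSup ⊥ disjoint_sdiff_self_left).copy (sdiff_union_of_subset hT)

lemma parts_addSingletons (hT : T ⊆ s) (Q : Finpartition (s \ T)) :
    (Q.addSingletons hT).parts = Q.parts ∪ T.map ⟨singleton, singleton_injective⟩ := rfl

lemma isolated_addSingletons (hT : T ⊆ s) {Q : Finpartition (s \ T)}
    (hQ : ∀ b ∈ Q.parts, 2 ≤ #b) : (Q.addSingletons hT).isolated = T := by
  ext a
  rw [mem_isolated, parts_addSingletons, mem_union]
  constructor
  · rintro (h | h)
    · simpa using hQ _ h
    · simpa using h
  · exact fun h => Or.inr (mem_map_of_mem _ h)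

noncomputable def isolatedEquiv (hT : T ⊆ s) :
    {P : Finpartition s // P.isolated = T} ≃
      {Q : Finpartition (s \ T) // ∀ b ∈ Q.parts, 2 ≤ #b} where
  toFun P := ⟨P.1.avoid T, by
    obtain ⟨P, rfl⟩ := P
    rw [parts_avoid_isolated]
    exact fun b hb => (mem_filter.1 hb).2⟩
  invFun Q := ⟨Q.1.addSingletons hT, isolated_addSingletons hT Q.2⟩
  left_inv := by
    rintro ⟨P, rfl⟩
    ext1; ext1
    rw [parts_addSingletons, parts_avoid_isolated]
    exact P.parts_eq_filter_union_isolated.symm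
  right_inv := by
    rintro ⟨Q, hQ⟩
    ext1; ext1
    have h := parts_avoid_isolated (Q.addSingletons hT)
    rw [isolated_addSingletons hT hQ] at h
    rw [h, parts_addSingletons, filter_union, filter_true_of_mem hQ, filter_false_of_mem,
      union_empty]
    simp

lemma card_parts_isolatedEquiv (hT : T ⊆ s) (P : {P : Finpartition s // P.isolated = T}) :
    #P.1.parts = #(isolatedEquiv hT P).1.parts + #T := by
  obtain ⟨P, rfl⟩ := P
  rw [P.card_parts_eq_card_filter_add_card_isolated, ← parts_avoid_isolated]
  rfl

end Isolated

end Finpartition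

variable {α β : Type*} [DecidableEq α] [DecidableEq β]

noncomputable def Finset.partD (s : Finset α) (k : ℕ) : ℕ :=
  Nat.card {P : Finpartition s // #P.parts = k ∧ ∀ b ∈ P.parts, 2 ≤ #b}

theorem Finset.partD_map (f : α ↪ β) (s : Finset α) (k : ℕ) :
    (s.map f).partD k = s.partD k := by
  refine (Nat.card_congr ((Finpartition.finsetMapEquiv f s).subtypeEquiv fun P => ?_)).symm
  simp [Finpartition.finsetMapEquiv]

theorem Finset.partD_eq_partD_card (s : Finset α) (k : ℕ) : s.partD k = _root_.partD #s k := by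
  set e : Fin #s ↪ α := s.equivFin.symm.toEmbedding.trans (.subtype _)
  have hs : (univ : Finset (Fin #s)).map e = s := by
    rw [← map_map, univ_map_equiv_to_embedding, univ_eq_attach, attach_map_val]
  calc s.partD k = ((univ : Finset (Fin #s)).map e).partD k := by rw [hs]
    _ = _root_.partD #s k := partD_map e univ k

theorem Finset.nat_card_isolated_fiber (s : Finset α) {T : Finset α} (hT : T ⊆ s) (j : ℕ) :
    Nat.card {P : Finpartition s // P.isolated = T ∧ #P.parts = j} =
      if #T ≤ j then (s \ T).partD (j - #T) else 0 := by
  let e : {P : Finpartition s // P.isolated = T ∧ #P.parts = j} ≃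
      {Q : Finpartition (s \ T) // (∀ b ∈ Q.parts, 2 ≤ #b) ∧ #Q.parts + #T = j} :=
    (Equiv.subtypeSubtypeEquivSubtypeInter (fun P : Finpartition s => P.isolated = T)
      (fun P => #P.parts = j)).symm.trans <|
    ((Finpartition.isolatedEquiv hT).subtypeEquiv fun P => by
      rw [Finpartition.card_parts_isolatedEquiv hT P]).trans <|
    Equiv.subtypeSubtypeEquivSubtypeInter
      (fun Q : Finpartition (s \ T) => ∀ b ∈ Q.parts, 2 ≤ #b) (fun Q => #Q.parts + #T = j)
  rw [Nat.card_congr e]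
  split_ifs with hTj
  · exact Nat.card_congr <| Equiv.subtypeEquivRight fun Q =>
      and_comm.trans (and_congr_left fun _ => by omega)
  · exact Nat.card_eq_zero.2 (.inl ⟨fun Q => hTj (Q.2.2 ▸ Nat.le_add_left _ _)⟩)

theorem Finset.nat_card_finpartition_eq_sum (s : Finset α) (j : ℕ) :
    Nat.card {P : Finpartition s // #P.parts = j} =
      ∑ T ∈ s.powerset with #T ≤ j, (s \ T).partD (j - #T) := by
  rw [sum_filter, ← sum_congr rfl fun T hT => s.nat_card_isolated_fiber (mem_powerset.1 hT) j]
  simp only [Nat.card_eq_fintype_card, Fintype.card_subtype]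
  rw [card_eq_sum_card_fiberwise (f := Finpartition.isolated) (t := s.powerset)
    fun P _ => mem_powerset.2 P.isolated_subset]
  simp_rw [filter_filter, and_comm]

theorem stirling2_eq_sum_choose_mul_partD (m r : ℕ) :
    stirling2 m r = ∑ i ∈ range (m + 1) with i ≤ r, m.choose i * partD (m - i) (r - i) := by
  have hsummand : ∀ T ∈ (univ : Finset (Fin m)).powerset,
      (if #T ≤ r then (univ \ T).partD (r - #T) else 0) =
        if #T ≤ r then partD (m - #T) (r - #T) else 0 := fun T _ => by
    rw [partD_eq_partD_card, card_univ_sdiff, Fintype.card_fin]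
  rw [stirling2, nat_card_finpartition_eq_sum, sum_filter, sum_congr rfl hsummand,
    sum_powerset_apply_card (fun i => if i ≤ r then partD (m - i) (r - i) else 0), card_univ,
    Fintype.card_fin, sum_filter]
  simp only [smul_eq_mul, mul_ite, mul_zero]

theorem stirling2_eq_sum_Icc_choose_mul_partD (m r : ℕ) :
    stirling2 m r = ∑ j ∈ Icc (m - r) m, m.choose j * partD j (r + j - m) := by
  rw [stirling2_eq_sum_choose_mul_partD]
  refine sum_nbij' (m - ·) (m - ·) ?_ ?_ ?_ ?_ ?_ <;> intro i hi <;>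
    simp only [mem_filter, mem_range, mem_Icc] at hi ⊢ <;> try omega
  rw [Nat.choose_symm (by omega), show r + (m - i) - m = r - i by omega]

theorem partD_eq_alternating_sum_stirling (n k : ℕ) :
    (partD n k : ℤ) =
      ∑ s ∈ Finset.Icc (n - k) n,
        (n.choose s : ℤ) * (-1) ^ (n - s) * stirling2 s (s + k - n) := by
  have h := binomial_inversion (f := fun j => (partD j (j + k - n) : ℤ))
    (g := fun s => (stirling2 s (s + k - n) : ℤ)) (Nat.sub_le n k) fun s hs => by
      rw [mem_Icc] at hs
      rw [stirling2_eq_sum_Icc_choose_mul_partD, show s - (s + k - n) = n - k by omega]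
      push_cast
      exact sum_congr rfl fun j _ => by rw [show s + k - n + j - s = j + k - n by omega]
  simpa using h
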